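/- arXiv:2209.00587 — 2 statements merged into one kernel-verified Lean document; each statement's English description precedes it below -/
import Mathlib

section
/- Let μ and ν be probability measures on ℝ^d, let Ω ⊂ ℝ^d contain the support of μ, and let 0 < α ≤ 1. Then ‖(μ−ν)·1_Ω‖_{C^{0,α}_*} ≥ (1/2)‖μ−ν‖_{C^{0,α}_*}. -/
open MeasureTheory Metric

/-- Dual full Hölder-`α` norm of the signed measure `(μ - ν)·1_S`:
`sup { ∫_S f d(μ-ν) : |f|_{Ċ^{0,α}} + ‖f‖_∞ ≤ 1 }` over continuous test functions on `ℝ^d`. -/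
noncomputable def dualHolderFullOn2 {d : ℕ} (α : ℝ) (S : Set (EuclideanSpace ℝ (Fin d)))
    (μ ν : Measure (EuclideanSpace ℝ (Fin d))) : ℝ :=
  sSup {r : ℝ | ∃ f : EuclideanSpace ℝ (Fin d) → ℝ, Continuous f ∧
    (∃ a b : ℝ, 0 ≤ a ∧ 0 ≤ b ∧ a + b ≤ 1 ∧
      (∀ x y, |f x - f y| ≤ a * dist x y ^ α) ∧ (∀ x, |f x| ≤ b)) ∧
    r = (∫ x in S, f x ∂μ) - ∫ x in S, f x ∂ν}

/-!
Split `∫ f d(μ - ν) = ∫_Ω f d(μ - ν) - ∫_{Ωᶜ} f dν`, using that `μ` does not charge `Ωᶜ`.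
The first term is at most `‖(μ-ν)·1_Ω‖`, the second at most `ν(Ωᶜ)` since `|f| ≤ 1`.
Testing `‖(μ-ν)·1_Ω‖` against the constant `1` gives `μ(Ω) - ν(Ω) = 1 - ν(Ω) = ν(Ωᶜ)`,
so `ν(Ωᶜ)` is itself at most `‖(μ-ν)·1_Ω‖`.
-/

section HolderUnitBall

variable {X : Type*} [PseudoMetricSpace X] {α : ℝ} {f : X → ℝ}

def MemHolderUnitBall (α : ℝ) (f : X → ℝ) : Prop :=
  ∃ a b : ℝ, 0 ≤ a ∧ 0 ≤ b ∧ a + b ≤ 1 ∧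
    (∀ x y, |f x - f y| ≤ a * dist x y ^ α) ∧ (∀ x, |f x| ≤ b)

theorem MemHolderUnitBall.abs_le_one (hf : MemHolderUnitBall α f) (x : X) : |f x| ≤ 1 := by
  obtain ⟨a, b, ha, -, hab, -, hb⟩ := hf
  linarith [hb x]

theorem memHolderUnitBall_const_one : MemHolderUnitBall α (fun _ : X ↦ (1 : ℝ)) :=
  ⟨0, 1, le_rfl, zero_le_one, by norm_num, fun _ _ ↦ by simp, fun _ ↦ by simp⟩

theorem memHolderUnitBall_zero : MemHolderUnitBall α (fun _ : X ↦ (0 : ℝ)) :=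
  ⟨0, 0, le_rfl, le_rfl, by norm_num, fun _ _ ↦ by simp, fun _ ↦ by simp⟩

end HolderUnitBall

section BoundedIntegrals

variable {X : Type*} [MeasurableSpace X] {μ ν : Measure X} {f : X → ℝ}

theorem abs_setIntegral_le_measureReal [IsFiniteMeasure μ] (hf : ∀ x, |f x| ≤ 1) (S : Set X) :
    |∫ x in S, f x ∂μ| ≤ μ.real S := by
  simpa using norm_setIntegral_le_of_norm_le_const (measure_lt_top μ S)
    fun x _ ↦ (Real.norm_eq_abs _).trans_le (hf x)

theorem integral_sub_integral_le_setIntegral_sub_add [IsFiniteMeasure ν] {Ω : Set X}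
    (hΩ : MeasurableSet Ω) (hsupp : μ Ωᶜ = 0) (hfν : AEStronglyMeasurable f ν)
    (hf : ∀ x, |f x| ≤ 1) :
    ∫ x, f x ∂μ - ∫ x, f x ∂ν ≤ (∫ x in Ω, f x ∂μ - ∫ x in Ω, f x ∂ν) + ν.real Ωᶜ := by
  have hμ : ∫ x in Ω, f x ∂μ = ∫ x, f x ∂μ := by
    rw [Measure.restrict_eq_self_of_ae_mem (mem_ae_iff.mpr hsupp)]
  have hν : ∫ x in Ω, f x ∂ν + ∫ x in Ωᶜ, f x ∂ν = ∫ x, f x ∂ν :=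
    integral_add_compl hΩ
      (.of_bound hfν 1 (.of_forall fun x ↦ (Real.norm_eq_abs _).trans_le (hf x)))
  have htail := abs_le.mp (abs_setIntegral_le_measureReal (μ := ν) hf Ωᶜ)
  linarith [htail.1]

end BoundedIntegrals

section DualHolderNorm

variable {d : ℕ} {α : ℝ} {S : Set (EuclideanSpace ℝ (Fin d))}
  {μ ν : Measure (EuclideanSpace ℝ (Fin d))} {f : EuclideanSpace ℝ (Fin d) → ℝ}

theorem le_dualHolderFullOn2 [IsFiniteMeasure μ] [IsFiniteMeasure ν] (hf : Continuous f)
    (hfα : MemHolderUnitBall α f) :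
    ∫ x in S, f x ∂μ - ∫ x in S, f x ∂ν ≤ dualHolderFullOn2 α S μ ν := by
  refine le_csSup ⟨μ.real S + ν.real S, ?_⟩ ⟨f, hf, hfα, rfl⟩
  rintro _ ⟨g, -, hgα : MemHolderUnitBall α g, rfl⟩
  linarith [(abs_le.mp (abs_setIntegral_le_measureReal (μ := μ) hgα.abs_le_one S)).2,
    (abs_le.mp (abs_setIntegral_le_measureReal (μ := ν) hgα.abs_le_one S)).1]

theorem dualHolderFullOn2_le {c : ℝ}
    (h : ∀ f, Continuous f → MemHolderUnitBall α f →
      ∫ x in S, f x ∂μ - ∫ x in S, f x ∂ν ≤ c) :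
    dualHolderFullOn2 α S μ ν ≤ c := by
  refine csSup_le ⟨0, fun _ ↦ 0, continuous_const, memHolderUnitBall_zero, by simp⟩ ?_
  rintro _ ⟨f, hf, hfα, rfl⟩
  exact h f hf hfα

theorem measureReal_compl_le_dualHolderFullOn2 [IsProbabilityMeasure μ] [IsProbabilityMeasure ν]
    {Ω : Set (EuclideanSpace ℝ (Fin d))} (hΩ : MeasurableSet Ω) (hsupp : μ Ωᶜ = 0) :
    ν.real Ωᶜ ≤ dualHolderFullOn2 α Ω μ ν := by
  have hμΩ : μ.real Ω = 1 := by
    have := probReal_compl_eq_one_sub (μ := μ) hΩ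
    rw [measureReal_def, hsupp, ENNReal.toReal_zero] at this
    linarith
  have := le_dualHolderFullOn2 (S := Ω) (μ := μ) (ν := ν) continuous_const
    (memHolderUnitBall_const_one (α := α))
  simp only [setIntegral_const, smul_eq_mul, mul_one, hμΩ] at this
  rwa [probReal_compl_eq_one_sub hΩ]

end DualHolderNorm

theorem dual_norm_restriction_ge_half_general (d : ℕ) (α : ℝ)
    (μ ν : Measure (EuclideanSpace ℝ (Fin d)))
    (hμ : IsProbabilityMeasure μ) (hν : IsProbabilityMeasure ν)
    (Ω : Set (EuclideanSpace ℝ (Fin d))) (hΩmeas : MeasurableSet Ω)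
    (hsupp : μ Ωᶜ = 0) :
    dualHolderFullOn2 α Ω μ ν ≥ (1 / 2) * dualHolderFullOn2 α Set.univ μ ν := by
  have hsplit : dualHolderFullOn2 α Set.univ μ ν ≤ dualHolderFullOn2 α Ω μ ν + ν.real Ωᶜ := by
    refine dualHolderFullOn2_le fun f hf hfα ↦ ?_
    rw [Measure.restrict_univ, Measure.restrict_univ]
    calc ∫ x, f x ∂μ - ∫ x, f x ∂ν
        ≤ (∫ x in Ω, f x ∂μ - ∫ x in Ω, f x ∂ν) + ν.real Ωᶜ :=
          integral_sub_integral_le_setIntegral_sub_add hΩmeas hsupp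
            hf.aestronglyMeasurable hfα.abs_le_one
      _ ≤ dualHolderFullOn2 α Ω μ ν + ν.real Ωᶜ := by
          gcongr
          exact le_dualHolderFullOn2 hf hfα
  linarith [measureReal_compl_le_dualHolderFullOn2 (α := α) (μ := μ) (ν := ν) hΩmeas hsupp]

/-- If `μ, ν` are probability measures on `ℝ^d`, `Ω` contains the support of `μ`, and
`0 < α ≤ 1`, then `‖(μ-ν)·1_Ω‖_{C^{0,α}_*} ≥ (1/2) ‖μ-ν‖_{C^{0,α}_*}`. -/
theorem dual_norm_restriction_ge_half (d : ℕ) (α : ℝ) (hα0 : 0 < α) (hα1 : α ≤ 1)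
    (μ ν : Measure (EuclideanSpace ℝ (Fin d)))
    (hμ : IsProbabilityMeasure μ) (hν : IsProbabilityMeasure ν)
    (Ω : Set (EuclideanSpace ℝ (Fin d))) (hΩmeas : MeasurableSet Ω)
    (hsupp : μ Ωᶜ = 0) :
    dualHolderFullOn2 α Ω μ ν ≥ (1 / 2) * dualHolderFullOn2 α Set.univ μ ν :=
  dual_norm_restriction_ge_half_general d α μ ν hμ hν Ω hΩmeas hsupp
end

section
/- Let (μ_N) be a sequence of probability measures on ℝ^d with densities uniformly bounded by M := sup_N ‖μ_N‖_{L^∞} < ∞, and let ν_N = (1/N)∑_{i=1}^N δ_{x_i^N} be atomic probability measures with N atoms. Then for every 0 < α ≤ 1 there is a constant C > 0 depending only on d, α, and M such that ‖μ_N − ν_N‖_{C^{0,α}_*} ≥ C N^{−α/d} for all N. -/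
/-!
Put the bump `φ = (r^α - dist(·, X)^α)₊` on the set `X` of the `N` atoms, with
`r = λ N^{-1/d}`. It is `α`-Hölder with constant `1` (because `t ↦ t^α` is, on `[0, ∞)`), equals
`r^α` on every atom, and vanishes outside the `r`-neighbourhood of `X`. That neighbourhood has
Lebesgue measure at most `N r^d |B₁| = λ^d |B₁|`, so for `λ = min(1, (2M|B₁|)⁻¹)` it carries at
most half of the mass of `μ_N`, while `φ ≤ 1`. Hence `-φ/2` is an admissible test function with
`∫ (-φ/2) d(μ_N - ν_N) ≥ r^α / 4`, a multiple of `N^{-α/d}`.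
-/

open MeasureTheory Metric ENNReal

/-- Dual full Hölder-`α` norm of `μ - ν`:
`sup { ∫ f d(μ-ν) : |f|_{Ċ^{0,α}} + ‖f‖_∞ ≤ 1 }`. -/
noncomputable def dualHolderFull3 {d : ℕ} (α : ℝ)
    (μ ν : Measure (EuclideanSpace ℝ (Fin d))) : ℝ :=
  sSup {r : ℝ | ∃ f : EuclideanSpace ℝ (Fin d) → ℝ, Continuous f ∧
    (∃ a b : ℝ, 0 ≤ a ∧ 0 ≤ b ∧ a + b ≤ 1 ∧
      (∀ x y, |f x - f y| ≤ a * dist x y ^ α) ∧ (∀ x, |f x| ≤ b)) ∧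
    r = (∫ x, f x ∂μ) - ∫ x, f x ∂ν}

lemma Real.abs_rpow_sub_rpow_le {α : ℝ} (hα0 : 0 ≤ α) (hα1 : α ≤ 1) {s t : ℝ}
    (hs : 0 ≤ s) (ht : 0 ≤ t) : |s ^ α - t ^ α| ≤ |s - t| ^ α := by
  wlog hts : t ≤ s generalizing s t
  · rw [abs_sub_comm, abs_sub_comm s t]
    exact this ht hs (le_of_not_ge hts)
  have hsub : s ^ α ≤ (s - t) ^ α + t ^ α := by
    simpa using Real.rpow_add_le_add_rpow (sub_nonneg.2 hts) ht hα0 hα1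
  rw [abs_of_nonneg (sub_nonneg.2 (Real.rpow_le_rpow ht hts hα0)),
    abs_of_nonneg (sub_nonneg.2 hts)]
  linarith

lemma Real.mul_mul_rpow_neg_one_div_pow {t : ℝ} (ht : 0 < t) {d : ℕ} (hd : d ≠ 0) (a : ℝ) :
    t * (a * t ^ (-(1 / d : ℝ))) ^ d = a ^ d := by
  rw [mul_pow, ← Real.rpow_natCast (t ^ _), ← Real.rpow_mul ht.le, neg_mul, one_div,
    inv_mul_cancel₀ (by positivity), Real.rpow_neg_one]
  field_simp

section HolderBump

variable {X : Type*} [PseudoMetricSpace X] {S : Set X} {r α : ℝ}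

noncomputable def holderBump (S : Set X) (r α : ℝ) (y : X) : ℝ :=
  max (r ^ α - infDist y S ^ α) 0

lemma holderBump_nonneg (y : X) : 0 ≤ holderBump S r α y :=
  le_max_right _ _

lemma holderBump_le (hr : 0 ≤ r) (y : X) : holderBump S r α y ≤ r ^ α :=
  max_le (sub_le_self _ (Real.rpow_nonneg infDist_nonneg α)) (Real.rpow_nonneg hr α)

lemma holderBump_of_mem (hr : 0 ≤ r) (hα : 0 < α) {y : X} (hy : y ∈ S) :
    holderBump S r α y = r ^ α := by
  simp [holderBump, infDist_zero_of_mem hy, Real.zero_rpow hα.ne', Real.rpow_nonneg hr]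

lemma holderBump_eq_zero_of_notMem_thickening (hS : S.Nonempty) (hr : 0 ≤ r) (hα : 0 ≤ α)
    {y : X} (hy : y ∉ thickening r S) : holderBump S r α y = 0 := by
  have hry : r ≤ infDist y S := not_lt.1 fun h => hy ((mem_thickening_iff_infDist_lt hS).2 h)
  exact max_eq_right (sub_nonpos.2 (Real.rpow_le_rpow hr hry hα))

lemma continuous_holderBump (hα : 0 ≤ α) : Continuous (holderBump S r α) :=
  (continuous_const.sub ((continuous_infDist_pt S).rpow_const fun _ => Or.inr hα)).max
    continuous_const

lemma abs_holderBump_sub_le (hα0 : 0 ≤ α) (hα1 : α ≤ 1) (y z : X) :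
    |holderBump S r α y - holderBump S r α z| ≤ dist y z ^ α :=
  calc |holderBump S r α y - holderBump S r α z|
      ≤ |(r ^ α - infDist y S ^ α) - (r ^ α - infDist z S ^ α)| :=
        abs_max_sub_max_le_abs _ _ _
    _ = |infDist z S ^ α - infDist y S ^ α| := by ring_nf
    _ ≤ |infDist z S - infDist y S| ^ α :=
        Real.abs_rpow_sub_rpow_le hα0 hα1 infDist_nonneg infDist_nonneg
    _ ≤ dist y z ^ α := by
        gcongr
        have h := (lipschitz_infDist_pt S).dist_le_mul z y
        rwa [Real.dist_eq, NNReal.coe_one, one_mul, dist_comm] at h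

lemma integral_holderBump_le [MeasurableSpace X] (μ : Measure X) [IsFiniteMeasure μ]
    (hS : S.Nonempty) (hr : 0 ≤ r) (hα : 0 ≤ α) :
    ∫ y, holderBump S r α y ∂μ ≤ r ^ α * μ.real (thickening r S) := by
  rw [← setIntegral_eq_integral_of_forall_compl_eq_zero fun y hy =>
    holderBump_eq_zero_of_notMem_thickening hS hr hα hy]
  refine (Real.le_norm_self _).trans (norm_setIntegral_le_of_norm_le_const (measure_lt_top _ _)
    fun y _ => ?_)
  rw [Real.norm_of_nonneg (holderBump_nonneg y)]
  exact holderBump_le hr y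

end HolderBump

lemma integral_smul_sum_dirac {X E ι : Type*} [MeasurableSpace X] [MeasurableSingletonClass X]
    [NormedAddCommGroup E] [NormedSpace ℝ E] [CompleteSpace E] (s : Finset ι) (c : ℝ≥0∞)
    (x : ι → X) (f : X → E) :
    ∫ y, f y ∂(c • ∑ i ∈ s, Measure.dirac (x i)) = c.toReal • ∑ i ∈ s, f (x i) := by
  rw [integral_smul_measure, integral_finsetSum_measure fun i _ => integrable_dirac enorm_lt_top]
  simp only [integral_dirac]

lemma measure_thickening_range_le {E ι : Type*} [NormedAddCommGroup E] [MeasurableSpace E]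
    [BorelSpace E] (μ : Measure E) [μ.IsAddHaarMeasure] [Fintype ι] (x : ι → E) (r : ℝ) :
    μ (thickening r (Set.range x)) ≤ Fintype.card ι * μ (ball 0 r) :=
  calc μ (thickening r (Set.range x)) = μ (⋃ i, ball (x i) r) := by
        rw [thickening_eq_biUnion_ball, Set.biUnion_range]
    _ ≤ ∑ i, μ (ball (x i) r) := measure_iUnion_fintype_le μ _
    _ = Fintype.card ι * μ (ball 0 r) := by
        simp [Measure.addHaar_ball_center]

lemma measureReal_thickening_range_le {E ι : Type*} [NormedAddCommGroup E] [NormedSpace ℝ E]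
    [MeasurableSpace E] [BorelSpace E] [FiniteDimensional ℝ E] [Fintype ι]
    (vol μ : Measure E) [vol.IsAddHaarMeasure] {M : ℝ} (hM : 0 ≤ M)
    (hμ : ∀ s, μ s ≤ ENNReal.ofReal M * vol s) (x : ι → E) {r : ℝ} (hr : 0 < r) :
    μ.real (thickening r (Set.range x)) ≤
      M * (Fintype.card ι * r ^ Module.finrank ℝ E * vol.real (ball 0 1)) := by
  refine toReal_le_of_le_ofReal (by positivity) ((hμ _).trans ?_)
  rw [ENNReal.ofReal_mul hM, ENNReal.ofReal_mul (by positivity),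
    ENNReal.ofReal_mul (by positivity), ENNReal.ofReal_natCast, ofReal_measureReal, mul_assoc,
    ← Measure.addHaar_ball_of_pos vol 0 hr]
  gcongr
  exact measure_thickening_range_le vol x r

section DualNorm

variable {d : ℕ} {α : ℝ} {μ ν : Measure (EuclideanSpace ℝ (Fin d))}
  [IsFiniteMeasure μ] [IsFiniteMeasure ν]

lemma integral_sub_integral_le_dualHolderFull3 {f : EuclideanSpace ℝ (Fin d) → ℝ}
    (hf : Continuous f) {a b : ℝ} (ha : 0 ≤ a) (hb : 0 ≤ b) (hab : a + b ≤ 1)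
    (hfa : ∀ y z, |f y - f z| ≤ a * dist y z ^ α) (hfb : ∀ y, |f y| ≤ b) :
    (∫ y, f y ∂μ) - ∫ y, f y ∂ν ≤ dualHolderFull3 α μ ν := by
  refine le_csSup ⟨μ.real Set.univ + ν.real Set.univ, ?_⟩
    ⟨f, hf, ⟨a, b, ha, hb, hab, hfa, hfb⟩, rfl⟩
  rintro _ ⟨g, -, ⟨a', b', ha', -, hab', -, hgb'⟩, rfl⟩
  have hg1 : ∀ y, ‖g y‖ ≤ 1 := fun y => (hgb' y).trans (by linarith)
  have hμ := norm_integral_le_of_norm_le_const (μ := μ) (Filter.Eventually.of_forall hg1)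
  have hν := norm_integral_le_of_norm_le_const (μ := ν) (Filter.Eventually.of_forall hg1)
  rw [one_mul, Real.norm_eq_abs, abs_le] at hμ hν
  linarith [hμ.2, hν.1]

lemma half_integral_sub_le_dualHolderFull3 {φ : EuclideanSpace ℝ (Fin d) → ℝ}
    (hφ : Continuous φ) (hφα : ∀ y z, |φ y - φ z| ≤ dist y z ^ α) (hφ1 : ∀ y, |φ y| ≤ 1) :
    ((∫ y, φ y ∂ν) - ∫ y, φ y ∂μ) / 2 ≤ dualHolderFull3 α μ ν := by
  have key := integral_sub_integral_le_dualHolderFull3 (μ := μ) (ν := ν) (α := α)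
    (f := fun y => -(φ y / 2)) (hφ.div_const 2).neg (a := 1 / 2) (b := 1 / 2)
    (by norm_num) (by norm_num) (by norm_num) (fun y z => ?_) (fun y => ?_)
  · rw [integral_neg, integral_neg, integral_div, integral_div] at key
    linarith
  · rw [show -(φ y / 2) - -(φ z / 2) = -((φ y - φ z) / 2) by ring, abs_neg, abs_div, abs_two]
    linarith [hφα y z]
  · rw [abs_neg, abs_div, abs_two]
    linarith [hφ1 y]

lemma rpow_div_four_le_dualHolderFull3 {N : ℕ} (hN : 0 < N) (hα0 : 0 < α) (hα1 : α ≤ 1)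
    (x : Fin N → EuclideanSpace ℝ (Fin d)) {r : ℝ} (hr0 : 0 ≤ r) (hr1 : r ≤ 1)
    (hmass : μ.real (thickening r (Set.range x)) ≤ 1 / 2) :
    r ^ α / 4 ≤ dualHolderFull3 α μ ((N : ℝ≥0∞)⁻¹ • ∑ i, Measure.dirac (x i)) := by
  set ν : Measure (EuclideanSpace ℝ (Fin d)) := (N : ℝ≥0∞)⁻¹ • ∑ i, Measure.dirac (x i)
  have : IsFiniteMeasure ν := Measure.smul_finite _ (by simpa using hN.ne')
  set φ := holderBump (Set.range x) r α
  have hν : ∫ y, φ y ∂ν = r ^ α := by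
    have hatoms (i : Fin N) : φ (x i) = r ^ α := holderBump_of_mem hr0 hα0 (Set.mem_range_self i)
    simp only [ν, integral_smul_sum_dirac, hatoms, Finset.sum_const, Finset.card_univ,
      Fintype.card_fin, nsmul_eq_mul, ENNReal.toReal_inv, ENNReal.toReal_natCast, smul_eq_mul]
    field_simp
  have hμ : ∫ y, φ y ∂μ ≤ r ^ α / 2 :=
    calc ∫ y, φ y ∂μ ≤ r ^ α * μ.real (thickening r (Set.range x)) :=
          integral_holderBump_le μ ⟨x ⟨0, hN⟩, Set.mem_range_self _⟩ hr0 hα0.le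
      _ ≤ r ^ α * (1 / 2) := by gcongr
      _ = r ^ α / 2 := by ring
  have hφ1 (y) : |φ y| ≤ 1 := by
    rw [abs_of_nonneg (holderBump_nonneg y)]
    exact (holderBump_le hr0 y).trans (Real.rpow_le_one hr0 hr1 hα0.le)
  calc r ^ α / 4 ≤ ((∫ y, φ y ∂ν) - ∫ y, φ y ∂μ) / 2 := by linarith
    _ ≤ dualHolderFull3 α μ ν := half_integral_sub_le_dualHolderFull3
        (continuous_holderBump hα0.le) (abs_holderBump_sub_le hα0.le hα1) hφ1

end DualNorm

/-- If `(μ_N)` are probability measures with densities uniformly bounded by `M` and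
`ν_N = (1/N) ∑_{i=1}^N δ_{x_i^N}` are atomic probability measures with `N` atoms, then
`‖μ_N - ν_N‖_{C^{0,α}_*} ≥ C N^{-α/d}` for a constant `C > 0` depending only on
`d`, `α` and `M`. -/
theorem dual_norm_atomic_lower_bound (d : ℕ) (hd : 0 < d) (α : ℝ) (hα0 : 0 < α) (hα1 : α ≤ 1)
    (M : ℝ) (hM : 0 < M) :
    ∃ C : ℝ, 0 < C ∧
      ∀ (μ : ℕ → Measure (EuclideanSpace ℝ (Fin d)))
        (x : (N : ℕ) → Fin N → EuclideanSpace ℝ (Fin d)),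
        (∀ N, IsProbabilityMeasure (μ N)) →
        (∀ N (s : Set (EuclideanSpace ℝ (Fin d))),
            μ N s ≤ ENNReal.ofReal M * volume s) →
        ∀ N : ℕ, 0 < N →
          dualHolderFull3 α (μ N)
              ((N : ℝ≥0∞)⁻¹ • ∑ i : Fin N, Measure.dirac (x N i)) ≥
            C * (N : ℝ) ^ (-(α / d)) := by
  set K := volume.real (ball (0 : EuclideanSpace ℝ (Fin d)) 1)
  have hK : 0 < K :=
    ENNReal.toReal_pos (measure_ball_pos volume _ one_pos).ne' measure_ball_lt_top.ne
  set lam := min 1 (2 * M * K)⁻¹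
  have hlam : 0 < lam := lt_min one_pos (by positivity)
  refine ⟨lam ^ α / 4, by positivity, fun μ x _ hμM N hN => ?_⟩
  have hNpos : (0 : ℝ) < N := Nat.cast_pos.2 hN
  set r := lam * (N : ℝ) ^ (-(1 / d : ℝ))
  have hr : 0 < r := by positivity
  have hr1 : r ≤ 1 := mul_le_one₀ (min_le_left _ _) (by positivity)
    (Real.rpow_le_one_of_one_le_of_nonpos (by exact_mod_cast hN) (neg_nonpos.2 (by positivity)))
  have hrα : r ^ α = lam ^ α * N ^ (-(α / d)) := by
    rw [Real.mul_rpow hlam.le (by positivity), ← Real.rpow_mul hNpos.le]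
    ring_nf
  have hmass : (μ N).real (thickening r (Set.range (x N))) ≤ 1 / 2 := by
    have h := measureReal_thickening_range_le volume (μ N) hM.le (hμM N) (x N) hr
    rw [Fintype.card_fin, finrank_euclideanSpace_fin,
      Real.mul_mul_rpow_neg_one_div_pow hNpos hd.ne'] at h
    have hlamd : lam ^ d ≤ (2 * M * K)⁻¹ :=
      (pow_le_of_le_one hlam.le (min_le_left _ _) hd.ne').trans (min_le_right _ _)
    calc (μ N).real (thickening r (Set.range (x N))) ≤ M * (lam ^ d * K) := h
      _ ≤ M * ((2 * M * K)⁻¹ * K) := by gcongr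
      _ = 1 / 2 := by field_simp
  calc lam ^ α / 4 * (N : ℝ) ^ (-(α / d)) = r ^ α / 4 := by rw [hrα]; ring
    _ ≤ _ := rpow_div_four_le_dualHolderFull3 hN hα0 hα1 (x N) hr.le hr1 hmass
end
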